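/- Let S be a unital associative ring, σ an injective ring endomorphism of S, δ a left σ-derivation of S, f ∈ S[t;σ,δ] monic, and h = Σ_{i=0}^{r} hᵢtⁱ a monic polynomial lying in the center of S[t;σ,δ] such that f = g·h for some g ∈ S[t;σ,δ]. Let C be the cyclic (f,σ,δ)-code associated with g. Then for a vector c = (c₀,…,c_{m−1}) ∈ S^m with associated polynomial c(t) = Σ_{i=0}^{m−1} cᵢtⁱ, the following are equivalent: (i) (c₀,…,c_{m−1}) ∈ C; (ii) c(t)∘h(t) = 0 in the Petit algebra S_f. -/

import Mathlib

/-- A presentation of the skew polynomial ring `S[t;σ,δ]`: a ring `R` together with a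
ring homomorphism `C : S →+* R`, a distinguished element `X` (playing the role of `t`)
satisfying the twisted commutation rule `X * C a = C (σ a) * X + C (δ a)`, and such that
every element of `R` is in a unique way a finite sum `∑ C aᵢ * X ^ i`. -/
structure SkewPolyRing (S : Type*) [Ring S] (σ : S →+* S) (δ : S → S)
    (R : Type*) [Ring R] where
  C : S →+* R
  X : R
  X_mul : ∀ a : S, X * C a = C (σ a) * X + C (δ a)
  coeff : R ≃+ (ℕ →₀ S)
  coeff_symm_apply : ∀ p : ℕ →₀ S, coeff.symm p = p.sum fun i a => C a * X ^ i

namespace SkewPolyRing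

variable {S : Type*} [Ring S] {σ : S →+* S} {δ : S → S} {R : Type*} [Ring R]

/-- The degree of a skew polynomial, with `deg 0 = ⊥`. -/
noncomputable def deg (P : SkewPolyRing S σ δ R) (x : R) : WithBot ℕ :=
  (P.coeff x).support.max

/-- The leading coefficient of a skew polynomial. -/
noncomputable def lcoeff (P : SkewPolyRing S σ δ R) (x : R) : S :=
  P.coeff x ((P.deg x).unbotD 0)

/-- `f` is monic of degree `m`. -/
def Monic (P : SkewPolyRing S σ δ R) (f : R) (m : ℕ) : Prop :=
  P.deg f = (m : WithBot ℕ) ∧ P.coeff f m = 1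

open Classical in
/-- The remainder of right division by `f`. -/
noncomputable def modr (P : SkewPolyRing S σ δ R) (f g : R) : R :=
  if h : ∃ qr : R × R, g = qr.1 * f + qr.2 ∧ P.deg qr.2 < P.deg f then
    (Classical.choose h).2
  else g

/-- The multiplication `x ∘ y = (x * y) mod_r f` of the Petit algebra `S_f`. -/
noncomputable def pmul (P : SkewPolyRing S σ δ R) (f x y : R) : R :=
  P.modr f (x * y)

/-- The element of `S_f` with coefficient vector `c ∈ S^m`. -/
def ofVec (P : SkewPolyRing S σ δ R) {m : ℕ} (c : Fin m → S) : R :=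
  ∑ i : Fin m, P.C (c i) * P.X ^ (i : ℕ)

end SkewPolyRing

/-- `δ` is a left `σ`-derivation of `S`. -/
def IsLeftSigmaDerivation {S : Type*} [Ring S] (σ : S →+* S) (δ : S → S) : Prop :=
  (∀ a b : S, δ (a + b) = δ a + δ b) ∧ ∀ a b : S, δ (a * b) = σ a * δ b + δ a * b

namespace SkewPolyRing

variable {S : Type*} [Ring S] {σ : S →+* S} {δ : S → S} {R : Type*} [Ring R]

/-- `I` is a left ideal of the Petit algebra `S_f` (whose underlying set is
`{x | deg x < m}` with multiplication `pmul f`). -/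
def IsLeftIdeal (P : SkewPolyRing S σ δ R) (f : R) (m : ℕ) (I : Set R) : Prop :=
  (∀ x ∈ I, P.deg x < (m : WithBot ℕ)) ∧ (0 : R) ∈ I ∧
    (∀ x ∈ I, ∀ y ∈ I, x + y ∈ I) ∧ (∀ x ∈ I, -x ∈ I) ∧
    ∀ a : R, P.deg a < (m : WithBot ℕ) → ∀ x ∈ I, P.pmul f a x ∈ I

/-- The set `S_f ∘ g` of left multiples of `g` in the Petit algebra `S_f`:
the principal left ideal generated by `g`. -/
def leftMulSet (P : SkewPolyRing S σ δ R) (f : R) (m : ℕ) (g : R) : Set R :=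
  {x : R | ∃ a : R, P.deg a < (m : WithBot ℕ) ∧ x = P.pmul f a g}

end SkewPolyRing

/-!
If `c = (a g) mod_r f`, say `c = a g - q f`, then centrality of `h` gives
`c h = a f - q h f = (a - q h) f`, so `c ∘ h = 0`. Conversely, if `c h = q f = q g h`,
cancelling the monic `h` on the right gives `c = q g`, and comparing degrees in `c h = q f`
gives `deg q < r ≤ m`, so `c = q ∘ g`. The degree theory of `S[t;σ,δ]` needed for this
(degrees add when multiplying by a monic polynomial, division with remainder by a monic
polynomial) is obtained by tracking leading terms modulo the additive subgroups of
polynomials of degree `< n`.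
-/

open Polynomial

namespace SkewPolyRing

variable {S : Type*} [Ring S] {σ : S →+* S} {δ : S → S} {R : Type*} [Ring R]
variable (P : SkewPolyRing S σ δ R)

/-- The coefficient sequence of a skew polynomial, read as an ordinary polynomial. It is only
additive, but it transports degrees and coefficients, so `S[X]`'s degree lemmas apply. -/
noncomputable def toPoly : R ≃+ S[X] :=
  P.coeff.trans (AddMonoidAlgebra.coeffAddEquiv.symm.trans (toFinsuppIso S).toAddEquiv.symm)

lemma deg_eq_degree_toPoly (x : R) : P.deg x = (P.toPoly x).degree := rfl

lemma coeff_eq_coeff_toPoly (x : R) (k : ℕ) : P.coeff x k = (P.toPoly x).coeff k := rfl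

lemma coeff_C_mul_X_pow (a : S) (n : ℕ) :
    P.coeff (P.C a * P.X ^ n) = Finsupp.single n a := by
  have h := P.coeff_symm_apply (Finsupp.single n a)
  rw [Finsupp.sum_single_index (by simp)] at h
  rw [← h, AddEquiv.apply_symm_apply]

lemma toPoly_C_mul_X_pow (a : S) (n : ℕ) : P.toPoly (P.C a * P.X ^ n) = monomial n a := by
  ext k
  rw [← coeff_eq_coeff_toPoly, coeff_C_mul_X_pow, Finsupp.single_apply, coeff_monomial]

lemma X_mul_C_mul_X_pow (a : S) (n : ℕ) :
    P.X * (P.C a * P.X ^ n) = P.C (σ a) * P.X ^ (n + 1) + P.C (δ a) * P.X ^ n := by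
  rw [← mul_assoc, P.X_mul, add_mul, mul_assoc, ← pow_succ']

noncomputable def degLT (n : ℕ) : AddSubgroup R :=
  (degreeLT S n).toAddSubgroup.comap P.toPoly.toAddMonoidHom

variable {P}

lemma mem_degLT {n : ℕ} {x : R} : x ∈ P.degLT n ↔ P.deg x < n := mem_degreeLT

lemma mem_degLT_zero {x : R} : x ∈ P.degLT 0 ↔ x = 0 := by
  rw [mem_degLT, Nat.cast_zero, Nat.WithBot.lt_zero_iff, deg_eq_degree_toPoly, degree_eq_bot,
    AddEquivClass.map_eq_zero_iff]

lemma degLT_mono {n n' : ℕ} (h : n ≤ n') : P.degLT n ≤ P.degLT n' :=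
  fun _ hx => degreeLT_mono h hx

lemma mem_degLT_succ {n : ℕ} {x : R} : x ∈ P.degLT (n + 1) ↔ P.deg x ≤ n := by
  rw [mem_degLT, deg_eq_degree_toPoly, degree_lt_iff_coeff_zero, degree_le_iff_coeff_zero]
  simp only [Nat.cast_lt, Nat.succ_le_iff]

lemma C_mul_X_pow_mem_degLT (a : S) (n : ℕ) : P.C a * P.X ^ n ∈ P.degLT (n + 1) := by
  rw [mem_degLT_succ, deg_eq_degree_toPoly, toPoly_C_mul_X_pow]
  exact degree_monomial_le n a

/-- Leading terms are tracked as congruences `x ≡ a tⁿ` modulo `degLT n`. -/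
lemma sub_C_mul_X_pow_mem_degLT_iff {x : R} {a : S} {n : ℕ} :
    x - P.C a * P.X ^ n ∈ P.degLT n ↔ x ∈ P.degLT (n + 1) ∧ P.coeff x n = a := by
  simp only [mem_degLT, deg_eq_degree_toPoly, degree_lt_iff_coeff_zero, map_sub, coeff_sub,
    toPoly_C_mul_X_pow, coeff_monomial, ← coeff_eq_coeff_toPoly]
  constructor
  · intro h
    refine ⟨fun k hk => ?_, ?_⟩
    · simpa [show n ≠ k by omega] using h k (by omega)
    · simpa [sub_eq_zero] using h n le_rfl
  · rintro ⟨h, rfl⟩ k hk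
    rcases hk.eq_or_lt with rfl | hlt
    · simp
    · simp [h k hlt, hlt.ne]

lemma sub_C_mul_X_pow_mem_degLT {x : R} {n : ℕ} (hx : x ∈ P.degLT (n + 1)) :
    x - P.C (P.coeff x n) * P.X ^ n ∈ P.degLT n :=
  sub_C_mul_X_pow_mem_degLT_iff.mpr ⟨hx, rfl⟩

lemma X_mul_mem_degLT {x : R} {n : ℕ} (hx : x ∈ P.degLT n) : P.X * x ∈ P.degLT (n + 1) := by
  induction n generalizing x with
  | zero =>
    rw [mem_degLT_zero.mp hx, mul_zero]
    exact zero_mem _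
  | succ n ih =>
    have hsplit : P.X * x = P.X * (x - P.C (P.coeff x n) * P.X ^ n) +
        (P.C (σ (P.coeff x n)) * P.X ^ (n + 1) + P.C (δ (P.coeff x n)) * P.X ^ n) := by
      rw [← X_mul_C_mul_X_pow, ← mul_add, sub_add_cancel]
    rw [hsplit]
    exact add_mem (degLT_mono (by omega) (ih (sub_C_mul_X_pow_mem_degLT hx)))
      (add_mem (C_mul_X_pow_mem_degLT _ _) (degLT_mono (by omega) (C_mul_X_pow_mem_degLT _ _)))

lemma X_pow_mul_mem_degLT {x : R} {n : ℕ} (hx : x ∈ P.degLT n) (i : ℕ) :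
    P.X ^ i * x ∈ P.degLT (n + i) := by
  induction i with
  | zero => simpa using hx
  | succ i ih =>
    rw [pow_succ', mul_assoc, ← add_assoc]
    exact X_mul_mem_degLT ih

lemma X_pow_mul_sub_mem_degLT {x : R} {b : S} {n : ℕ} (hx : x - P.C b * P.X ^ n ∈ P.degLT n)
    (i : ℕ) : P.X ^ i * x - P.C (σ^[i] b) * P.X ^ (n + i) ∈ P.degLT (n + i) := by
  induction i with
  | zero => simpa using hx
  | succ i ih =>
    have hsplit : P.X ^ (i + 1) * x - P.C (σ^[i + 1] b) * P.X ^ (n + (i + 1)) =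
        P.X * (P.X ^ i * x - P.C (σ^[i] b) * P.X ^ (n + i)) +
          P.C (δ (σ^[i] b)) * P.X ^ (n + i) := by
      rw [mul_sub, X_mul_C_mul_X_pow, Function.iterate_succ_apply', pow_succ', mul_assoc,
        ← add_assoc]
      abel
    rw [hsplit, ← add_assoc]
    exact add_mem (X_mul_mem_degLT ih) (C_mul_X_pow_mem_degLT _ _)

lemma C_mul_mem_degLT (a : S) {x : R} {n : ℕ} (hx : x ∈ P.degLT n) :
    P.C a * x ∈ P.degLT n := by
  induction n generalizing x with
  | zero =>
    rw [mem_degLT_zero.mp hx, mul_zero]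
    exact zero_mem _
  | succ n ih =>
    have hsplit : P.C a * x = P.C a * (x - P.C (P.coeff x n) * P.X ^ n) +
        P.C (a * P.coeff x n) * P.X ^ n := by
      rw [mul_sub, map_mul, mul_assoc, sub_add_cancel]
    rw [hsplit]
    exact add_mem (degLT_mono (by omega) (ih (sub_C_mul_X_pow_mem_degLT hx)))
      (C_mul_X_pow_mem_degLT _ _)

lemma mul_mem_degLT {x y : R} {n k : ℕ} (hx : x ∈ P.degLT n) (hy : y ∈ P.degLT (k + 1)) :
    x * y ∈ P.degLT (n + k) := by
  induction n generalizing x with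
  | zero =>
    rw [mem_degLT_zero.mp hx, zero_mul]
    exact zero_mem _
  | succ n ih =>
    have hsplit : x * y = (x - P.C (P.coeff x n) * P.X ^ n) * y +
        P.C (P.coeff x n) * (P.X ^ n * y) := by
      rw [sub_mul, mul_assoc, sub_add_cancel]
    rw [hsplit]
    refine add_mem (degLT_mono (by omega) (ih (sub_C_mul_X_pow_mem_degLT hx))) ?_
    exact C_mul_mem_degLT _ (degLT_mono (by omega) (X_pow_mul_mem_degLT hy n))

/-- The leading term of a product: `(a tⁿ + ⋯)(b tᵏ + ⋯) = a σⁿ(b) tⁿ⁺ᵏ + ⋯`. -/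
lemma mul_sub_mem_degLT {x y : R} {a b : S} {n k : ℕ} (hx : x - P.C a * P.X ^ n ∈ P.degLT n)
    (hy : y - P.C b * P.X ^ k ∈ P.degLT k) :
    x * y - P.C (a * σ^[n] b) * P.X ^ (n + k) ∈ P.degLT (n + k) := by
  have hsplit : x * y - P.C (a * σ^[n] b) * P.X ^ (n + k) =
      (x - P.C a * P.X ^ n) * y + P.C a * (P.X ^ n * y - P.C (σ^[n] b) * P.X ^ (k + n)) := by
    rw [map_mul, add_comm k n]
    noncomm_ring
  rw [hsplit]
  refine add_mem (mul_mem_degLT hx (sub_C_mul_X_pow_mem_degLT_iff.mp hy).1) ?_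
  exact C_mul_mem_degLT _ (by simpa [add_comm] using X_pow_mul_sub_mem_degLT hy n)

lemma Monic.mem_degLT_add_one {y : R} {r : ℕ} (hy : P.Monic y r) : y ∈ P.degLT (r + 1) :=
  mem_degLT_succ.mpr hy.1.le

lemma Monic.sub_X_pow_mem_degLT {y : R} {r : ℕ} (hy : P.Monic y r) :
    y - P.C 1 * P.X ^ r ∈ P.degLT r :=
  sub_C_mul_X_pow_mem_degLT_iff.mpr ⟨hy.mem_degLT_add_one, hy.2⟩

lemma Monic.deg_mul {y : R} {r : ℕ} (hy : P.Monic y r) (x : R) :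
    P.deg (x * y) = P.deg x + r := by
  by_cases hx : x = 0
  · simp [hx, deg_eq_degree_toPoly]
  have hx' : P.toPoly x ≠ 0 := (AddEquivClass.map_ne_zero_iff).mpr hx
  set d := (P.toPoly x).natDegree
  have hxd : P.deg x = d := degree_eq_natDegree hx'
  have hlead : x - P.C (P.coeff x d) * P.X ^ d ∈ P.degLT d :=
    sub_C_mul_X_pow_mem_degLT (mem_degLT_succ.mpr hxd.le)
  obtain ⟨hle, hcoeff⟩ :=
    sub_C_mul_X_pow_mem_degLT_iff.mp (mul_sub_mem_degLT hlead hy.sub_X_pow_mem_degLT)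
  rw [Function.iterate_fixed (map_one σ), mul_one] at hcoeff
  rw [hxd, ← Nat.cast_add]
  refine degree_eq_of_le_of_coeff_ne_zero (p := P.toPoly (x * y)) (mem_degLT_succ.mp hle) ?_
  rw [← coeff_eq_coeff_toPoly, hcoeff]
  exact leadingCoeff_ne_zero.mpr hx'

lemma Monic.mem_degLT_of_mul_mem {x y : R} {n r : ℕ} (hy : P.Monic y r)
    (h : x * y ∈ P.degLT (n + r)) : x ∈ P.degLT n := by
  rw [mem_degLT, hy.deg_mul, Nat.cast_add] at h
  exact mem_degLT.mpr ((WithBot.add_lt_add_iff_right (WithBot.natCast_ne_bot r)).mp h)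

lemma Monic.mul_left_injective {y : R} {r : ℕ} (hy : P.Monic y r) :
    Function.Injective (· * y) := by
  intro x x' h
  have hzero : (x - x') * y ∈ P.degLT (0 + r) := by
    rw [sub_mul, show x * y = x' * y from h, sub_self]
    exact zero_mem _
  exact sub_eq_zero.mp (mem_degLT_zero.mp (hy.mem_degLT_of_mul_mem hzero))

lemma Monic.le_of_eq_mul {f x y : R} {m r : ℕ} (hy : P.Monic y r) (hf : P.Monic f m)
    (h : f = x * y) : r ≤ m := by
  have hdeg := hy.deg_mul x
  rw [← h, hf.1] at hdeg
  induction hx : P.deg x with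
  | bot => simp [hx] at hdeg
  | coe d =>
    rw [hx, ← Nat.cast_withBot, ← Nat.cast_add, Nat.cast_inj] at hdeg
    omega

lemma Monic.exists_sub_mul_mem_degLT {f : R} {m : ℕ} (hf : P.Monic f m) (x : R) :
    ∃ q, x - q * f ∈ P.degLT m := by
  suffices h : ∀ n x, x ∈ P.degLT (m + n) → ∃ q, x - q * f ∈ P.degLT m from
    h ((P.toPoly x).natDegree + 1) x
      (degLT_mono (by omega) (mem_degLT_succ.mpr (degree_le_natDegree (p := P.toPoly x))))
  intro n
  induction n with
  | zero => exact fun x hx => ⟨0, by simpa using hx⟩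
  | succ n ih =>
    intro x hx
    set a := P.coeff x (m + n)
    have hx' : x - P.C a * P.X ^ (m + n) ∈ P.degLT (m + n) := sub_C_mul_X_pow_mem_degLT hx
    have hqf : P.C a * P.X ^ n * f - P.C a * P.X ^ (m + n) ∈ P.degLT (m + n) := by
      have hlead : P.C a * P.X ^ n - P.C a * P.X ^ n ∈ P.degLT n := by
        rw [sub_self]
        exact zero_mem _
      have := mul_sub_mem_degLT hlead hf.sub_X_pow_mem_degLT
      rwa [Function.iterate_fixed (map_one σ), mul_one, add_comm n m] at this
    obtain ⟨q, hq⟩ := ih (x - P.C a * P.X ^ n * f) (by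
      simpa only [sub_sub_sub_cancel_right] using sub_mem hx' hqf)
    exact ⟨q + P.C a * P.X ^ n, by rwa [add_mul, ← sub_sub, sub_right_comm]⟩

lemma Monic.modr_eq {f x q rem : R} {m : ℕ} (hf : P.Monic f m) (hx : x = q * f + rem)
    (hrem : rem ∈ P.degLT m) : P.modr f x = rem := by
  have hex : ∃ qr : R × R, x = qr.1 * f + qr.2 ∧ P.deg qr.2 < P.deg f :=
    ⟨(q, rem), hx, by rw [hf.1]; exact mem_degLT.mp hrem⟩
  rw [modr, dif_pos hex]
  obtain ⟨hx', hrem'⟩ := Classical.choose_spec hex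
  set q' := (Classical.choose hex).1
  set rem' := (Classical.choose hex).2
  have hdiff : (q' - q) * f = rem - rem' := by
    rw [sub_mul, sub_eq_sub_iff_add_eq_add, ← hx', add_comm rem, ← hx]
  have hq : q' - q = 0 := by
    refine mem_degLT_zero.mp (hf.mem_degLT_of_mul_mem ?_)
    rw [zero_add, hdiff]
    exact sub_mem hrem (mem_degLT.mpr (by rw [← hf.1]; exact hrem'))
  rw [hq, zero_mul, eq_comm, sub_eq_zero] at hdiff
  exact hdiff.symm

lemma Monic.exists_eq_mul_add_modr {f : R} {m : ℕ} (hf : P.Monic f m) (x : R) :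
    ∃ q, x = q * f + P.modr f x := by
  obtain ⟨q, hq⟩ := hf.exists_sub_mul_mem_degLT x
  exact ⟨q, by rw [hf.modr_eq (add_sub_cancel (q * f) x).symm hq, add_sub_cancel]⟩

lemma ofVec_mem_degLT {m : ℕ} (c : Fin m → S) : P.ofVec c ∈ P.degLT m :=
  sum_mem fun i _ => degLT_mono i.isLt (C_mul_X_pow_mem_degLT _ _)

end SkewPolyRing

theorem petit_parityCheck_general {S R : Type*} [Ring S] [Ring R]
    (σ : S →+* S)
    (δ : S → S)
    (P : SkewPolyRing S σ δ R) (f : R) (m : ℕ) (hf : P.Monic f m)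
    (g h : R) (r : ℕ) (hh : P.Monic h r)
    (hcentral : ∀ x : R, h * x = x * h)
    (hfgh : f = g * h)
    (c : Fin m → S) :
    (P.ofVec c ∈ P.leftMulSet f m g) ↔ P.pmul f (P.ofVec c) h = 0 := by
  open SkewPolyRing in
  have hc := P.ofVec_mem_degLT c
  constructor
  · rintro ⟨a, -, hca⟩
    obtain ⟨q, hq⟩ := hf.exists_eq_mul_add_modr (a * g)
    have hmul : P.ofVec c * h = (a - q * h) * f :=
      calc P.ofVec c * h = (a * g - q * f) * h := by rw [hca, pmul, eq_sub_of_add_eq' hq.symm]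
        _ = a * f - q * (h * f) := by rw [sub_mul, mul_assoc, ← hfgh, mul_assoc, ← hcentral f]
        _ = (a - q * h) * f := by rw [sub_mul, mul_assoc]
    exact hf.modr_eq (by rw [hmul, add_zero]) (zero_mem _)
  · intro h0
    obtain ⟨q, hq⟩ := hf.exists_eq_mul_add_modr (P.ofVec c * h)
    rw [← pmul, h0, add_zero] at hq
    have hcg : P.ofVec c = q * g :=
      hh.mul_left_injective (show P.ofVec c * h = q * g * h by rw [hq, hfgh, mul_assoc])
    have hqr : q ∈ P.degLT r := hf.mem_degLT_of_mul_mem (by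
      rw [← hq, add_comm]
      exact mul_mem_degLT hc hh.mem_degLT_add_one)
    refine ⟨q, mem_degLT.mp (degLT_mono (hh.le_of_eq_mul hf hfgh) hqr), ?_⟩
    rw [pmul, ← hcg, hf.modr_eq (by rw [zero_mul, zero_add]) hc]

/-- parity check polynomial for a cyclic `(f,σ,δ)`-code.
If `f = g·h` with `h` monic and central in `S[t;σ,δ]`, then a vector
`c ∈ S^m` lies in the cyclic `(f,σ,δ)`-code associated with `g` if and only if
`c(t) ∘ h(t) = 0` in the Petit algebra `S_f`. -/
theorem petit_parityCheck {S R : Type*} [Ring S] [Ring R]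
    (σ : S →+* S) (hσ : Function.Injective σ)
    (δ : S → S) (hδ : IsLeftSigmaDerivation σ δ)
    (P : SkewPolyRing S σ δ R) (f : R) (m : ℕ) (hf : P.Monic f m)
    (g h : R) (r : ℕ) (hh : P.Monic h r)
    (hcentral : ∀ x : R, h * x = x * h)
    (hfgh : f = g * h)
    (c : Fin m → S) :
    (P.ofVec c ∈ P.leftMulSet f m g) ↔ P.pmul f (P.ofVec c) h = 0 :=
  petit_parityCheck_general σ δ P f m hf g h r hh hcentral hfgh c
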